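/- Let X be a metric space, let ε ≥ 0 be a real number, and let u, p, q, w, f be points of X. Suppose that dist(u,p) = dist(u,q) + dist(q,p), that dist(u,p) ≤ (1+ε)·dist(q,p) + 1, and that dist(q,f) ≤ (1+ε)·dist(q,w) + 1. Then dist(u,f) ≤ (1+ε)·dist(u,w) + (2+ε)·ε·dist(u,p) + (3+ε). -/

import Mathlib

/-!
The portal `q` lies on a shortest path from `u` to `p` and is nearly as far from `p` as `u` is,
so `q` is within `ε · dist u p + 1` of `u`. Moving the base point of the bound on `f` from `q`
to `u` by the triangle inequality then costs only a multiple of `dist u q`.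
-/

section

variable {X : Type*} [PseudoMetricSpace X]

lemma dist_le_mul_add_of_dist_eq_add {ε c : ℝ} (hε : 0 ≤ ε) {u p q : X}
    (hq : dist u p = dist u q + dist q p) (hle : dist u p ≤ (1 + ε) * dist q p + c) :
    dist u q ≤ ε * dist u p + c := by
  have hqp : dist q p ≤ dist u p := by linarith [dist_nonneg (x := u) (y := q)]
  linarith [mul_le_mul_of_nonneg_left hqp hε]

lemma dist_le_of_dist_le_mul_add {K c : ℝ} (hK : 0 ≤ K) {u q w f : X}
    (h : dist q f ≤ K * dist q w + c) :
    dist u f ≤ K * dist u w + (1 + K) * dist u q + c := by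
  have hqw : K * dist q w ≤ K * (dist u q + dist u w) := by
    gcongr
    rw [dist_comm u q]
    exact dist_triangle q u w
  linarith [dist_triangle u q f]

end

theorem stmt_5 {X : Type*} [MetricSpace X] (ε : ℝ) (hε : 0 ≤ ε) (u p q w f : X)
    (h1 : dist u p = dist u q + dist q p)
    (h2 : dist u p ≤ (1 + ε) * dist q p + 1)
    (h3 : dist q f ≤ (1 + ε) * dist q w + 1) :
    dist u f ≤ (1 + ε) * dist u w + (2 + ε) * ε * dist u p + (3 + ε) := by
  have huq := dist_le_mul_add_of_dist_eq_add hε h1 h2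
  calc dist u f ≤ (1 + ε) * dist u w + (1 + (1 + ε)) * dist u q + 1 :=
        dist_le_of_dist_le_mul_add (by linarith) h3
    _ ≤ (1 + ε) * dist u w + (2 + ε) * (ε * dist u p + 1) + 1 := by
        linarith [mul_le_mul_of_nonneg_left huq (by linarith : (0 : ℝ) ≤ 2 + ε)]
    _ = (1 + ε) * dist u w + (2 + ε) * ε * dist u p + (3 + ε) := by ring
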